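/- arXiv:1605.05089 — 4 statements merged into one kernel-verified Lean document; each statement's English description precedes it below -/
import Mathlib

section
/- Let λ ∈ ℂ be any root of the characteristic polynomial of B_R (regarded as a complex matrix). Then there exist a ∈ R, a character χ ∈ Σ_a, and a function u : R → Rˣ with x − u(x) ∈ ann(a) for every x ∈ F_a, such that λ = ∑_{x∈F_a} β(x)·χ(u(x)). -/
/-!
An eigenvector `f` of `B_R` satisfies `∑ₓ β(x) f(b x) = λ f(b)` for all `b`. Pick `a` with
`f(a) ≠ 0` and `(a)` minimal among the principal ideals of such points: then `f(a y) = 0` unless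
`y ∈ F_a`, and each `y ∈ F_a` agrees modulo `ann(a)` with a unit `u(y)` (units lift along
quotients of Artinian rings). So `g(w) = f(a w)` is a nonzero function on `Rˣ` with
`∑_{x ∈ F_a} β(x) g(v u(x)) = λ g(v)`. Expanding `g` in the characters of `Rˣ` and comparing
coefficients, a character `χ` occurring in `g` satisfies `∑ ν(x) χ(φ(x)) = t` for every relation
`∑ ν(x) g(v φ(x)) = t g(v)`. This gives the formula for `λ`, and `χ ∈ Σ_a` follows from
`g(v w) = g(v)` for `w ≡ 1 mod ann(a)`.
-/

open Finset Polynomial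

open scoped Classical

/-- The multiplication part `B_R` of the transition matrix:
`B_R(a,b) = ∑_{x ∈ R : a·x = b} β(x)`. -/
noncomputable def Bmat (R : Type) [CommRing R] [Fintype R] (β : R → ℝ) :
    Matrix R R ℝ :=
  fun a b => ∑ x ∈ Finset.univ.filter (fun x => a * x = b), β x

/-- The annihilator ideal `ann(a) = {x ∈ R : x·a = 0}`. -/
def annId {R : Type} [CommRing R] (a : R) : Ideal R where
  carrier := {x | x * a = 0}
  add_mem' := by
    intro x y hx hy
    simp only [Set.mem_setOf_eq] at *
    rw [add_mul, hx, hy, add_zero]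
  zero_mem' := by simp
  smul_mem' := by
    intro c x hx
    simp only [smul_eq_mul, Set.mem_setOf_eq] at *
    rw [mul_assoc, hx, mul_zero]

open scoped Matrix

theorem linearIndependent_units_monoidHom (G : Type*) [MulOneClass G] :
    LinearIndependent ℂ (fun (χ : G →* ℂˣ) (v : G) => (χ v : ℂ)) :=
  (linearIndependent_monoidHom G ℂ).comp (fun χ => (Units.coeHom ℂ).comp χ)
    fun _ _ h => MonoidHom.ext fun v => Units.ext (DFunLike.congr_fun h v)

section Characters

variable {G : Type*} [CommGroup G] [Finite G]

theorem span_units_monoidHom_eq_top :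
    Submodule.span ℂ (Set.range fun (χ : G →* ℂˣ) (v : G) => (χ v : ℂ)) = ⊤ := by
  have : NeZero (Monoid.exponent G : ℂ) :=
    ⟨by exact_mod_cast (Monoid.ExponentExists.of_finite (G := G)).exponent_pos.ne'⟩
  have := Fintype.ofFinite G
  have := Fintype.ofFinite (G →* ℂˣ)
  refine (linearIndependent_units_monoidHom G).span_eq_top_of_card_eq_finrank' ?_
  rw [Module.finrank_fintype_fun_eq_card, Fintype.card_eq_nat_card, Fintype.card_eq_nat_card,
    CommGroup.card_monoidHom_of_hasEnoughRootsOfUnity]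

theorem exists_monoidHom_sum_eq_of_sum_translate_eq {g : G → ℂ} (hg : g ≠ 0) :
    ∃ χ : G →* ℂˣ, ∀ {ι : Type*} (s : Finset ι) (ν : ι → ℂ) (φ : ι → G) (t : ℂ),
      (∀ v, ∑ i ∈ s, ν i * g (v * φ i) = t * g v) → ∑ i ∈ s, ν i * (χ (φ i) : ℂ) = t := by
  have := Fintype.ofFinite (G →* ℂˣ)
  obtain ⟨c, hc⟩ : ∃ c : (G →* ℂˣ) → ℂ, ∑ χ, c χ • (fun v => (χ v : ℂ)) = g :=
    (Submodule.mem_span_range_iff_exists_fun ℂ).mp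
      (span_units_monoidHom_eq_top (G := G) ▸ Submodule.mem_top)
  have hg_apply (w : G) : g w = ∑ χ, c χ * χ w := by simp [← hc]
  obtain ⟨χ₀, hχ₀⟩ : ∃ χ, c χ ≠ 0 := by
    by_contra! h
    exact hg (by simpa [h] using hc.symm)
  refine ⟨χ₀, fun s ν φ t hrel => ?_⟩
  have hcomb : ∑ χ, (c χ * ((∑ i ∈ s, ν i * (χ (φ i) : ℂ)) - t)) •
      (fun v => (χ v : ℂ)) = 0 := by
    funext v
    rw [Pi.zero_apply, ← sub_eq_zero.mpr (hrel v)]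
    simp only [Finset.sum_apply, Pi.smul_apply, smul_eq_mul, hg_apply, map_mul, Units.val_mul,
      mul_sum, sum_mul, mul_sub, sub_mul, sum_sub_distrib]
    rw [sum_comm]
    congr 1
    · exact sum_congr rfl fun i _ => sum_congr rfl fun χ _ => by ring
    · exact sum_congr rfl fun χ _ => by ring
  have h₀ := Fintype.linearIndependent_iff.mp (linearIndependent_units_monoidHom G) _ hcomb χ₀
  exact sub_eq_zero.mp ((mul_eq_zero.mp h₀).resolve_left hχ₀)

end Characters

theorem Matrix.exists_mulVec_eq_smul_of_isRoot_charpoly {K n : Type*} [CommRing K] [IsDomain K]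
    [Fintype n] [DecidableEq n] {A : Matrix n n K} {μ : K} (h : A.charpoly.IsRoot μ) :
    ∃ v ≠ 0, A *ᵥ v = μ • v := by
  have hμ : Module.End.HasEigenvalue (toLin' A) μ := by
    rwa [Module.End.hasEigenvalue_iff_isRoot_charpoly, Matrix.charpoly_toLin']
  obtain ⟨v, hv⟩ := hμ.exists_hasEigenvector
  exact ⟨v, hv.2, by simpa using hv.apply_eq_smul⟩

theorem IsArtinianRing.exists_unit_mk_eq {R : Type*} [CommRing R] [IsArtinianRing R] (I : Ideal R)
    {x : R} (hx : IsUnit (Ideal.Quotient.mk I x)) :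
    ∃ w : Rˣ, Ideal.Quotient.mk I w = Ideal.Quotient.mk I x := by
  obtain ⟨n, y, hy⟩ := IsArtinian.exists_pow_succ_smul_dvd x (1 : R)
  replace hy : x ^ (n + 1) * y = x ^ n := by simpa using hy
  have hpow (k : ℕ) : x ^ (n + k) * y ^ k = x ^ n := by
    induction k with
    | zero => simp
    | succ k ih => linear_combination (x ^ k * y ^ k) * hy + ih
  -- `e` is an idempotent that is `1` modulo `I`, and `x` is invertible in the corner `e R`.
  set e := x ^ n * y ^ n
  have he : e * e = e := by
    calc e * e = x ^ (n + n) * y ^ n * y ^ n := by ring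
      _ = e := by rw [hpow]
  have hxe : x * y * e = e := by
    calc x * y * e = x ^ (n + 1) * y * y ^ n := by ring
      _ = e := by rw [hy]
  have hinv : (x * e + (1 - e)) * (y * e + (1 - e)) = 1 := by
    linear_combination (x * y - x - y + 1) * he + hxe
  have hmk_e : Ideal.Quotient.mk I e = 1 := by
    have hXY : Ideal.Quotient.mk I (x * y) = 1 := by
      refine (hx.pow n).mul_left_cancel ?_
      rw [mul_one, ← map_pow, ← map_mul]
      congr 1
      linear_combination hy
    rw [show e = (x * y) ^ n by ring, map_pow, hXY, one_pow]
  refine ⟨⟨_, _, hinv, by rw [mul_comm, hinv]⟩, ?_⟩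
  simp [hmk_e]

theorem mem_annId {R : Type} [CommRing R] {a x : R} : x ∈ annId a ↔ x * a = 0 := Iff.rfl

theorem isUnit_mk_annId_of_mem_span {R : Type} [CommRing R] {a y : R}
    (h : a ∈ Ideal.span {a * y}) : IsUnit (Ideal.Quotient.mk (annId a) y) := by
  obtain ⟨c, hc⟩ := Ideal.mem_span_singleton'.mp h
  refine .of_mul_eq_one (Ideal.Quotient.mk (annId a) c) ?_
  rw [← map_mul, ← map_one (Ideal.Quotient.mk _), Ideal.Quotient.eq, mem_annId]
  linear_combination hc

theorem exists_apply_ne_zero_forall_not_isUnit {R M : Type} [CommRing R] [IsArtinianRing R]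
    [Zero M] {f : R → M} (hf : f ≠ 0) :
    ∃ a, f a ≠ 0 ∧ ∀ y, ¬IsUnit (Ideal.Quotient.mk (annId a) y) → f (a * y) = 0 := by
  obtain ⟨b, hb⟩ := Function.ne_iff.mp hf
  obtain ⟨_, ⟨a, ha, rfl⟩, hmin⟩ :=
    IsArtinian.set_has_minimal ((fun b => Ideal.span {b}) '' {b | f b ≠ 0}) ⟨_, b, hb, rfl⟩
  refine ⟨a, ha, fun y hy => by_contra fun hay => hy (isUnit_mk_annId_of_mem_span ?_)⟩
  have hle : Ideal.span {a * y} ≤ Ideal.span {a} :=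
    Ideal.span_singleton_le_span_singleton.mpr (dvd_mul_right a y)
  have hge : Ideal.span {a} ≤ Ideal.span {a * y} :=
    not_lt_iff_le_imp_ge.mp (hmin _ ⟨a * y, hay, rfl⟩) hle
  exact hge (Ideal.mem_span_singleton_self a)

theorem sum_filter_isUnit_mk_annId_eq {R S : Type} [CommRing R] [Fintype R] [Semiring S]
    {ω f : R → S} {lam : S} {a : R} {u : R → Rˣ}
    (hf : ∀ b, ∑ x, ω x * f (b * x) = lam * f b)
    (hvanish : ∀ y, ¬IsUnit (Ideal.Quotient.mk (annId a) y) → f (a * y) = 0)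
    (hu : ∀ x, IsUnit (Ideal.Quotient.mk (annId a) x) → x - u x ∈ annId a) (v : Rˣ) :
    ∑ x ∈ univ.filter (fun x => IsUnit (Ideal.Quotient.mk (annId a) x)),
      ω x * f (a * ↑(v * u x)) = lam * f (a * v) := by
  rw [← hf, ← sum_subset
    (subset_univ (univ.filter fun x => IsUnit (Ideal.Quotient.mk (annId a) x)))]
  · refine sum_congr rfl fun x hx => ?_
    have hx' := mem_annId.mp (hu x (mem_filter.mp hx).2)
    congr 2
    push_cast
    linear_combination -(v : R) * hx'
  · intro x _ hx
    rw [mul_assoc, hvanish, mul_zero]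
    rw [map_mul, IsUnit.mul_iff]
    exact fun h => hx (mem_filter.mpr ⟨mem_univ x, h.2⟩)

theorem Bmat_map_mulVec_apply (R : Type) [CommRing R] [Fintype R] (β : R → ℝ) (f : R → ℂ)
    (b : R) :
    ((Bmat R β).map (fun t : ℝ => (t : ℂ)) *ᵥ f) b = ∑ x, (β x : ℂ) * f (b * x) := by
  rw [← sum_fiberwise univ (fun x => b * x)]
  simp only [Matrix.mulVec, dotProduct, Matrix.map_apply, Bmat, Complex.ofReal_sum, sum_mul]
  exact sum_congr rfl fun c _ => sum_congr rfl fun x hx => by rw [(mem_filter.mp hx).2]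

theorem stmt2_general (R : Type) [CommRing R] [Fintype R]
    (β : R → ℝ)
    (lam : ℂ)
    (hlam : (((Bmat R β).map (fun t : ℝ => (t : ℂ))).charpoly).IsRoot lam) :
    ∃ (a : R) (χ : Rˣ →* ℂˣ) (u : R → Rˣ),
      (∀ v : Rˣ, ((v : R) - 1) ∈ annId a → χ v = 1) ∧
      (∀ x : R, IsUnit (Ideal.Quotient.mk (annId a) x) → x - (u x : R) ∈ annId a) ∧
      lam = ∑ x ∈ Finset.univ.filter
          (fun x => IsUnit (Ideal.Quotient.mk (annId a) x)),
        (β x : ℂ) * (χ (u x) : ℂ) := by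
  obtain ⟨f, hf0, hf⟩ := Matrix.exists_mulVec_eq_smul_of_isRoot_charpoly hlam
  have heig (b : R) : ∑ x, (β x : ℂ) * f (b * x) = lam * f b := by
    rw [← Bmat_map_mulVec_apply, hf, Pi.smul_apply, smul_eq_mul]
  obtain ⟨a, ha, hvanish⟩ := exists_apply_ne_zero_forall_not_isUnit hf0
  have hlift (x : R) : ∃ w : Rˣ, IsUnit (Ideal.Quotient.mk (annId a) x) → x - w ∈ annId a := by
    by_cases hx : IsUnit (Ideal.Quotient.mk (annId a) x)
    · obtain ⟨w, hw⟩ := IsArtinianRing.exists_unit_mk_eq (annId a) hx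
      exact ⟨w, fun _ => Ideal.Quotient.eq.mp hw.symm⟩
    · exact ⟨1, fun h => absurd h hx⟩
  choose u hu using hlift
  have hg : (fun w : Rˣ => f (a * w)) ≠ 0 := fun h => ha (by simpa using congr_fun h 1)
  obtain ⟨χ, hχ⟩ := exists_monoidHom_sum_eq_of_sum_translate_eq hg
  refine ⟨a, χ, u, fun v hv => ?_, hu,
    (hχ _ _ u lam (sum_filter_isUnit_mk_annId_eq heig hvanish hu)).symm⟩
  have hav : a * v = a := by linear_combination mem_annId.mp hv
  have hv_invariant (w : Rˣ) :
      ∑ _i ∈ {()}, (1 : ℂ) * f (a * ↑(w * v)) = 1 * f (a * w) := by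
    rw [sum_singleton, Units.val_mul, mul_comm (w : R), ← mul_assoc, hav]
  exact Units.ext (by simpa using hχ {()} _ (fun _ => v) 1 hv_invariant)

/-- Every eigenvalue of `B_R` is of the form `∑_{x ∈ F_a} β(x)·χ(u(x))`
for some `a ∈ R`, `χ ∈ Σ_a`, and compatible choice of units `u`. -/
theorem stmt2 (R : Type) [CommRing R] [Fintype R]
    (β : R → ℝ) (hβ : ∀ x, 0 ≤ β x) (hβsum : ∑ x, β x = 1)
    (lam : ℂ)
    (hlam : (((Bmat R β).map (fun t : ℝ => (t : ℂ))).charpoly).IsRoot lam) :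
    ∃ (a : R) (χ : Rˣ →* ℂˣ) (u : R → Rˣ),
      (∀ v : Rˣ, ((v : R) - 1) ∈ annId a → χ v = 1) ∧
      (∀ x : R, IsUnit (Ideal.Quotient.mk (annId a) x) → x - (u x : R) ∈ annId a) ∧
      lam = ∑ x ∈ Finset.univ.filter
          (fun x => IsUnit (Ideal.Quotient.mk (annId a) x)),
        (β x : ℂ) * (χ (u x) : ℂ) :=
  stmt2_general R β lam hlam
end

section
/- Suppose β(x) = 1/|R| for all x ∈ R. Then the set of nonzero roots of the characteristic polynomial of B_R (regarded as a complex matrix) is exactly {|F_a|/|R| : a ∈ R}. In particular, every eigenvalue of B_R is a rational number. -/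
open Finset Polynomial

open scoped Classical

/-!
Since `B_R(a, b) ≠ 0` only when `b ∈ aR`, ordering `R` along a linear extension of reverse
inclusion of principal ideals makes `B_R` block triangular, with one diagonal block for each
principal ideal `aR`, indexed by its generators. For uniform `β` every entry of that block is
`|ann a| / |R|`, so its only nonzero eigenvalue is `#{generators of aR} · |ann a| / |R|`.
Finally `x ↦ a x` maps `F_a` onto the generators of `aR` with fibres the cosets of `ann a`,
so this eigenvalue is `|F_a| / |R|`.
-/

theorem Matrix.isRoot_charpoly_of_const_iff {ι K : Type*} [Fintype ι] [DecidableEq ι]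
    [Nonempty ι] [CommRing K] [IsDomain K] {c μ : K} (hμ : μ ≠ 0) :
    (Matrix.of fun _ _ : ι => c).charpoly.IsRoot μ ↔ μ = Fintype.card ι * c := by
  have hJ : (Matrix.of fun _ _ : ι => c) = Matrix.vecMulVec (fun _ => c) (fun _ => 1) := by
    ext; simp [Matrix.vecMulVec_apply]
  obtain ⟨k, hk⟩ := Nat.exists_eq_add_one_of_ne_zero (Fintype.card_ne_zero (α := ι))
  have hdot : ((fun _ => c) ⬝ᵥ fun _ : ι => (1 : K)) = (k + 1 : ℕ) * c := by
    simp [dotProduct, hk]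
  rw [hJ, Matrix.charpoly_vecMulVec, IsRoot.def, hdot, hk, Nat.add_sub_cancel]
  simp only [eval_sub, eval_pow, eval_X, eval_smul, smul_eq_mul]
  rw [pow_succ', ← sub_mul, mul_eq_zero, or_iff_left (pow_ne_zero _ hμ), sub_eq_zero]

section PrincipalIdeals

variable {R : Type} [CommRing R]

theorem isUnit_mk_annId_iff {a x : R} :
    IsUnit (Ideal.Quotient.mk (annId a) x) ↔ Ideal.span {a * x} = Ideal.span {a} := by
  rw [le_antisymm_iff, Ideal.span_singleton_le_span_singleton,
    Ideal.span_singleton_le_span_singleton, and_iff_right (dvd_mul_right a x),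
    isUnit_iff_exists_inv, (Ideal.Quotient.mk_surjective (I := annId a)).exists]
  refine exists_congr fun y => ?_
  rw [← map_mul, ← map_one (Ideal.Quotient.mk (annId a)), Ideal.Quotient.eq]
  change (x * y - 1) * a = 0 ↔ a = a * x * y
  constructor <;> intro h <;> linear_combination -h

/-- A linear preorder on `R` in which `a` comes before `b` whenever `b ∈ aR`, with ties exactly
between generators of the same principal ideal. -/
noncomputable def spanKey (a : R) : LinearExtension (Ideal R)ᵒᵈ :=
  toLinearExtension (OrderDual.toDual (Ideal.span {a}))

theorem spanKey_eq_iff {a b : R} : spanKey a = spanKey b ↔ Ideal.span {a} = Ideal.span {b} :=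
  Iff.rfl

theorem blockTriangular_spanKey {K : Type*} [Zero K] {M : Matrix R R K}
    (hM : ∀ a b, ¬ a ∣ b → M a b = 0) : M.BlockTriangular spanKey := by
  intro a b hlt
  refine hM a b fun hdvd => hlt.not_ge (toLinearExtension.monotone ?_)
  exact OrderDual.toDual_le_toDual.2 (Ideal.span_singleton_le_span_singleton.2 hdvd)

variable [Fintype R]

theorem card_mul_eq_of_dvd {a b : R} (h : a ∣ b) : #{x | a * x = b} = #{x | a * x = 0} := by
  obtain ⟨x₀, rfl⟩ := h
  refine card_nbij' (· - x₀) (· + x₀) ?_ ?_ (fun _ _ => sub_add_cancel _ _)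
    (fun _ _ => add_sub_cancel_right _ _) <;>
  · intro x hx
    simp_all [mul_sub, mul_add]

theorem card_mul_eq_zero_congr {a b : R} (h : Ideal.span {a} = Ideal.span {b}) :
    #{x | a * x = 0} = #{x | b * x = 0} := by
  obtain ⟨hba, hab⟩ := le_antisymm_iff.1 h
  obtain ⟨u, hu⟩ := Ideal.span_singleton_le_span_singleton.1 hab
  obtain ⟨v, hv⟩ := Ideal.span_singleton_le_span_singleton.1 hba
  congr 1
  refine filter_congr fun x _ => ⟨fun h => ?_, fun h => ?_⟩
  · linear_combination x * hu + u * h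
  · linear_combination x * hv + v * h

theorem card_isUnit_mk_annId (a : R) :
    #{x | IsUnit (Ideal.Quotient.mk (annId a) x)} =
      #{b | Ideal.span {b} = Ideal.span {a}} * #{x | a * x = 0} := by
  simp_rw [isUnit_mk_annId_iff]
  rw [card_eq_sum_card_fiberwise (f := (a * ·)) (t := {b | Ideal.span {b} = Ideal.span {a}})
    (fun x hx => by simpa using hx), ← smul_eq_mul, ← sum_const]
  refine sum_congr rfl fun b hb => ?_
  rw [← card_mul_eq_of_dvd (Ideal.span_singleton_le_span_singleton.1 (mem_filter.1 hb).2.le)]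
  congr 1
  ext x
  simp only [mem_filter, mem_univ, true_and, and_iff_right_iff_imp]
  rintro rfl
  exact (mem_filter.1 hb).2

end PrincipalIdeals

section Uniform

variable {R : Type} [CommRing R] [Fintype R] {β : R → ℝ}

theorem Bmat_apply_of_uniform (hβ : ∀ x, β x = 1 / (Fintype.card R : ℝ)) (a b : R) :
    Bmat R β a b = #{x | a * x = b} / Fintype.card R := by
  simp [Bmat, hβ, div_eq_mul_inv]

theorem toSquareBlock_Bmat_of_uniform (hβ : ∀ x, β x = 1 / (Fintype.card R : ℝ)) (a : R) :
    ((Bmat R β).map (fun t : ℝ => (t : ℂ))).toSquareBlock spanKey (spanKey a) =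
      Matrix.of fun _ _ => (#{x | a * x = 0} / Fintype.card R : ℂ) := by
  ext ⟨i, hi⟩ ⟨j, hj⟩
  have hij : Ideal.span {j} ≤ Ideal.span {i} := (spanKey_eq_iff.1 (hj.trans hi.symm)).le
  simp only [Matrix.toSquareBlock_def, Matrix.of_apply, Matrix.map_apply,
    Bmat_apply_of_uniform hβ, card_mul_eq_of_dvd (Ideal.span_singleton_le_span_singleton.1 hij),
    card_mul_eq_zero_congr (spanKey_eq_iff.1 hi)]
  push_cast
  rfl

theorem isRoot_charpoly_Bmat_iff (hβ : ∀ x, β x = 1 / (Fintype.card R : ℝ)) {μ : ℂ}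
    (hμ : μ ≠ 0) :
    ((Bmat R β).map (fun t : ℝ => (t : ℂ))).charpoly.IsRoot μ ↔
      ∃ a : R, μ = #{x | IsUnit (Ideal.Quotient.mk (annId a) x)} / Fintype.card R := by
  have hM : ∀ a b, ¬ a ∣ b → (Bmat R β).map (fun t : ℝ => (t : ℂ)) a b = 0 := by
    intro a b hab
    simp [Bmat, filter_false_of_mem fun x _ (h : a * x = b) => hab ⟨x, h.symm⟩]
  rw [(blockTriangular_spanKey hM).charpoly, isRoot_prod, exists_mem_image]
  simp only [mem_univ, true_and]
  refine exists_congr fun a => ?_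
  have : Nonempty {b // spanKey b = spanKey a} := ⟨⟨a, rfl⟩⟩
  rw [toSquareBlock_Bmat_of_uniform hβ, Matrix.isRoot_charpoly_of_const_iff hμ,
    card_isUnit_mk_annId, Fintype.card_subtype]
  simp only [spanKey_eq_iff]
  push_cast
  rw [mul_div_assoc]

end Uniform

/-- With uniform multiplication probabilities, the nonzero eigenvalues of `B_R`
are exactly the numbers `|F_a|/|R|` for `a ∈ R`; in particular every eigenvalue
is rational. -/
theorem stmt7 (R : Type) [CommRing R] [Fintype R]
    (β : R → ℝ) (hβ : ∀ x, β x = 1 / (Fintype.card R : ℝ)) :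
    ({lam : ℂ | lam ≠ 0 ∧
        (((Bmat R β).map (fun t : ℝ => (t : ℂ))).charpoly).IsRoot lam} =
      {lam : ℂ | ∃ a : R, lam =
        ((Finset.univ.filter
            (fun x => IsUnit (Ideal.Quotient.mk (annId a) x))).card : ℂ) /
          (Fintype.card R : ℂ)}) ∧
    ∀ lam : ℂ, (((Bmat R β).map (fun t : ℝ => (t : ℂ))).charpoly).IsRoot lam →
      ∃ q : ℚ, lam = (q : ℂ) := by
  refine ⟨Set.ext fun μ => ⟨fun ⟨hμ, h⟩ => (isRoot_charpoly_Bmat_iff hβ hμ).1 h, ?_⟩, ?_⟩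
  · rintro ⟨a, rfl⟩
    have hF : 0 < #{x | IsUnit (Ideal.Quotient.mk (annId a) x)} :=
      card_pos.2 ⟨1, by simp⟩
    have hμ : (#{x | IsUnit (Ideal.Quotient.mk (annId a) x)} / Fintype.card R : ℂ) ≠ 0 := by
      simp [hF.ne', Fintype.card_ne_zero]
    exact ⟨hμ, (isRoot_charpoly_Bmat_iff hβ hμ).2 ⟨a, rfl⟩⟩
  · intro μ h
    rcases eq_or_ne μ 0 with rfl | hμ
    · exact ⟨0, by simp⟩
    obtain ⟨a, rfl⟩ := (isRoot_charpoly_Bmat_iff hβ hμ).1 h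
    exact ⟨#{x | IsUnit (Ideal.Quotient.mk (annId a) x)} / Fintype.card R, by push_cast; rfl⟩
end

section
/- Let π be a stationary distribution of M_R. Then for every x ∈ R: (1 − (1−α)·∑_{r∈F_x} β(r))·π(x) = α/|R| + (1−α)·∑_{y∈R : xR ⊊ yR} (∑_{r∈R : y·r = x} β(r))·π(y), where the outer sum is over all y ∈ R whose principal ideal strictly contains the principal ideal generated by x. -/
/-!
Stationarity gives `π x = α/|R| + (1-α) ∑ₐ π a · B(a,x)`, and `B(a,x)` vanishes unless `a ∣ x`.
The terms with `xR = aR` come from associates `a = x·u` of `x` (in a finite ring, generators of the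
same principal ideal differ by a unit). Multiplication by a unit is an automorphism of the chain, so
by uniqueness of the stationary distribution (`M` contracts sum-zero vectors in `ℓ¹`) `π a = π x`.
These terms then contribute `π x` times the `β`-mass of the `r` with `a·r = x` for some `a ∈ xR`,
and those `r` are exactly the units modulo `ann(x)`.
-/

open Finset

open scoped Classical

/-- The transition matrix `M_R(a,b) = α/|R| + (1−α)·B_R(a,b)`. -/
noncomputable def Mmat (R : Type) [CommRing R] [Fintype R] (α : ℝ) (β : R → ℝ) :
    Matrix R R ℝ :=
  fun a b => α / (Fintype.card R : ℝ) + (1 - α) * Bmat R β a b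

open Matrix

theorem exists_isIdempotentElem_pow {M : Type*} [Monoid M] [Finite M] (w : M) :
    ∃ n, 0 < n ∧ IsIdempotentElem (w ^ n) := by
  obtain ⟨m, n, hmn, h⟩ := Finite.exists_ne_map_eq_of_infinite (fun n : ℕ => w ^ n)
  wlog hlt : m < n generalizing m n
  · exact this n m hmn.symm h.symm (by omega)
  obtain ⟨q, hq, rfl⟩ : ∃ q, 0 < q ∧ n = m + q := ⟨n - m, by omega, by omega⟩
  have absorb : ∀ j, w ^ m * w ^ (j * q) = w ^ m := by
    intro j
    induction j with
    | zero => simp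
    | succ j ih => rw [add_one_mul, pow_add, ← mul_assoc, ih, ← pow_add, ← h]
  obtain ⟨r, hr⟩ : ∃ r, (m + 1) * q = m + r :=
    Nat.exists_eq_add_of_le (le_trans (Nat.le_succ m) (Nat.le_mul_of_pos_right _ hq))
  refine ⟨(m + 1) * q, by positivity, ?_⟩
  calc w ^ ((m + 1) * q) * w ^ ((m + 1) * q) = w ^ m * w ^ ((m + 1) * q) * w ^ r := by
        rw [← pow_add, ← pow_add, ← pow_add]; congr 1; omega
    _ = w ^ ((m + 1) * q) := by rw [absorb, ← pow_add, hr]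

theorem associated_of_dvd_dvd_of_finite {R : Type*} [CommRing R] [Finite R] {x a : R}
    (hxa : x ∣ a) (hax : a ∣ x) : Associated x a := by
  obtain ⟨s, rfl⟩ := hxa
  obtain ⟨t, ht⟩ := hax
  have hx : ∀ j, x * (s * t) ^ j = x := by
    intro j
    induction j with
    | zero => simp
    | succ j ih => rw [pow_succ, ← mul_assoc, ih, ← mul_assoc, ← ht]
  obtain ⟨n, hn, he⟩ := exists_isIdempotentElem_pow (s * t)
  obtain ⟨k, rfl⟩ : ∃ k, n = k + 1 := ⟨n - 1, by omega⟩
  set e := (s * t) ^ (k + 1)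
  -- `e` is the identity of the part of `R` on which `s` is invertible, with inverse `t (st)^k`.
  let u : Rˣ :=
    { val := e * s + (1 - e)
      inv := e * t * (s * t) ^ k + (1 - e)
      val_inv := by linear_combination (e + 2 - s - t * (s * t) ^ k) * he.eq
      inv_val := by linear_combination (e + 2 - s - t * (s * t) ^ k) * he.eq }
  exact ⟨u, by linear_combination (s - 1) * hx (k + 1)⟩

namespace Matrix

variable {n : Type*} [Fintype n] [DecidableEq n] {B : Matrix n n ℝ}

theorem sum_abs_vecMul_le_of_mem_rowStochastic (hB : B ∈ rowStochastic ℝ n) (d : n → ℝ) :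
    ∑ j, |(d ᵥ* B) j| ≤ ∑ i, |d i| :=
  calc ∑ j, |(d ᵥ* B) j| ≤ ∑ j, ∑ i, |d i| * B i j := by
        gcongr with j
        refine (abs_sum_le_sum_abs _ _).trans_eq (sum_congr rfl fun i _ => ?_)
        rw [abs_mul, abs_of_nonneg (nonneg_of_mem_rowStochastic hB)]
    _ = ∑ i, |d i| := by
        rw [sum_comm]
        simp_rw [← mul_sum, sum_row_of_mem_rowStochastic hB, mul_one]

theorem eq_zero_of_eq_smul_vecMul_of_mem_rowStochastic (hB : B ∈ rowStochastic ℝ n) {c : ℝ}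
    (hc0 : 0 ≤ c) (hc1 : c < 1) {d : n → ℝ} (hd : d = c • (d ᵥ* B)) : d = 0 := by
  have hle : ∑ i, |d i| ≤ c * ∑ i, |d i| :=
    calc ∑ i, |d i| = c * ∑ j, |(d ᵥ* B) j| := by
          conv_lhs => rw [hd]
          simp only [Pi.smul_apply, smul_eq_mul, abs_mul, abs_of_nonneg hc0, mul_sum]
      _ ≤ c * ∑ i, |d i| :=
          mul_le_mul_of_nonneg_left (sum_abs_vecMul_le_of_mem_rowStochastic hB d) hc0
  have hnonneg : 0 ≤ ∑ i, |d i| := sum_nonneg fun i _ => abs_nonneg (d i)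
  have hzero : ∑ i, |d i| = 0 := by nlinarith
  funext i
  exact abs_eq_zero.mp ((sum_eq_zero_iff_of_nonneg fun j _ => abs_nonneg (d j)).mp hzero i
    (mem_univ i))

end Matrix

section MarkovChain

variable {R : Type} [CommRing R] [Fintype R] {β : R → ℝ}

theorem Bmat_mem_rowStochastic (hβ : ∀ x, 0 ≤ β x) (hβsum : ∑ x, β x = 1) :
    Bmat R β ∈ rowStochastic ℝ R :=
  mem_rowStochastic_iff_sum.mpr
    ⟨fun _ _ => sum_nonneg fun r _ => hβ r,
      fun a => (sum_fiberwise univ (a * ·) β).trans hβsum⟩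

theorem Bmat_mul_units (u : Rˣ) (a b : R) : Bmat R β (a * u) (b * u) = Bmat R β a b := by
  refine sum_congr (filter_congr fun r _ => ?_) fun _ _ => rfl
  rw [mul_right_comm, Units.mul_left_inj]

theorem Bmat_eq_zero_of_not_dvd {a b : R} (h : ¬a ∣ b) : Bmat R β a b = 0 :=
  sum_eq_zero fun r hr => absurd ⟨r, ((mem_filter.mp hr).2).symm⟩ h

theorem vecMul_Mmat_apply (α : ℝ) (p : R → ℝ) (b : R) :
    (p ᵥ* Mmat R α β) b = α / Fintype.card R * ∑ a, p a + (1 - α) * (p ᵥ* Bmat R β) b := by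
  simp only [vecMul, dotProduct, Mmat, mul_add, sum_add_distrib, mul_sum]
  congr 1 <;> refine sum_congr rfl fun a _ => by ring

theorem eq_of_vecMul_Mmat_eq_self {α : ℝ} (hα0 : 0 < α) (hα1 : α ≤ 1) (hβ : ∀ x, 0 ≤ β x)
    (hβsum : ∑ x, β x = 1) {p q : R → ℝ} (hsum : ∑ x, p x = ∑ x, q x)
    (hp : p ᵥ* Mmat R α β = p) (hq : q ᵥ* Mmat R α β = q) : p = q := by
  rw [← sub_eq_zero]
  refine eq_zero_of_eq_smul_vecMul_of_mem_rowStochastic (Bmat_mem_rowStochastic hβ hβsum)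
    (sub_nonneg.mpr hα1) (by linarith) (funext fun b => ?_)
  have hd : (p - q) ᵥ* Mmat R α β = p - q := by rw [sub_vecMul, hp, hq]
  have hd0 : ∑ x, (p - q) x = 0 := by simp [hsum]
  rw [← congrFun hd b, vecMul_Mmat_apply, hd0, mul_zero, zero_add, Pi.smul_apply, smul_eq_mul]

theorem stationary_eq_of_associated {α : ℝ} (hα0 : 0 < α) (hα1 : α ≤ 1) (hβ : ∀ x, 0 ≤ β x)
    (hβsum : ∑ x, β x = 1) {π : R → ℝ} (hπ : π ᵥ* Mmat R α β = π) {x a : R}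
    (h : Associated x a) : π a = π x := by
  obtain ⟨u, rfl⟩ := h
  suffices (fun z => π (z * u)) = π from congrFun this x
  refine eq_of_vecMul_Mmat_eq_self hα0 hα1 hβ hβsum
    (Fintype.sum_equiv (Units.mulRight u) _ _ fun _ => rfl) (funext fun b => ?_) hπ
  calc ∑ a, π (a * u) * Mmat R α β a b = ∑ a, π (a * u) * Mmat R α β (a * u) (b * u) := by
        simp only [Mmat, Bmat_mul_units]
    _ = π (b * u) := by
        rw [← congrFun hπ (b * u)]
        exact Fintype.sum_equiv (Units.mulRight u) _ (fun c => π c * Mmat R α β c (b * u))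
          fun _ => rfl

end MarkovChain

section Annihilator

variable {R : Type} [CommRing R]

theorem mk_annId_eq_mk_iff {x p q : R} :
    Ideal.Quotient.mk (annId x) p = Ideal.Quotient.mk (annId x) q ↔ x * p = x * q := by
  rw [Ideal.Quotient.eq, ← sub_eq_zero (a := x * p), ← mul_sub, mul_comm]
  rfl

theorem mk_annId_mul_eq_one_iff {x p r : R} :
    Ideal.Quotient.mk (annId x) p * Ideal.Quotient.mk (annId x) r = 1 ↔ x * p * r = x := by
  rw [← map_mul, ← map_one (Ideal.Quotient.mk (annId x)), mk_annId_eq_mk_iff, mul_one,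
    mul_assoc]

theorem isUnit_mk_annId_of_dvd_of_mul_eq {x a r : R} (hxa : x ∣ a) (har : a * r = x) :
    IsUnit (Ideal.Quotient.mk (annId x) r) := by
  obtain ⟨p, rfl⟩ := hxa
  exact IsUnit.of_mul_eq_one_right _ (mk_annId_mul_eq_one_iff.mpr har)

theorem dvd_and_mul_eq_iff_eq_mul {x r s a : R}
    (hs : Ideal.Quotient.mk (annId x) s * Ideal.Quotient.mk (annId x) r = 1) :
    x ∣ a ∧ a * r = x ↔ a = x * s := by
  constructor
  · rintro ⟨⟨p, rfl⟩, h⟩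
    have hp := mk_annId_mul_eq_one_iff.mpr h
    refine mk_annId_eq_mk_iff.mp ?_
    linear_combination Ideal.Quotient.mk (annId x) s * hp - Ideal.Quotient.mk (annId x) p * hs
  · rintro rfl
    exact ⟨dvd_mul_right x s, mk_annId_mul_eq_one_iff.mp hs⟩

theorem sum_Bmat_filter_dvd [Fintype R] (β : R → ℝ) (x : R) :
    ∑ a ∈ univ.filter (x ∣ ·), Bmat R β a x =
      ∑ r ∈ univ.filter (fun r => IsUnit (Ideal.Quotient.mk (annId x) r)), β r := by
  simp only [Bmat]
  rw [sum_comm' (s' := fun r => univ.filter fun a => x ∣ a ∧ a * r = x)]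
  · refine sum_congr rfl fun r hr => ?_
    obtain ⟨s, hs⟩ : ∃ s, Ideal.Quotient.mk (annId x) s * Ideal.Quotient.mk (annId x) r = 1 := by
      obtain ⟨v, hv⟩ := (mem_filter.mp hr).2.exists_left_inv
      obtain ⟨s, rfl⟩ := Ideal.Quotient.mk_surjective v
      exact ⟨s, hv⟩
    have hfiber : univ.filter (fun a => x ∣ a ∧ a * r = x) = {x * s} := by
      ext a
      simp [dvd_and_mul_eq_iff_eq_mul hs]
    rw [hfiber, sum_singleton]
  · intro a r
    simp only [mem_filter, mem_univ, true_and]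
    exact ⟨fun ⟨hxa, har⟩ => ⟨⟨hxa, har⟩, isUnit_mk_annId_of_dvd_of_mul_eq hxa har⟩,
      fun h => h.1⟩

end Annihilator

theorem vecMul_Bmat_apply_of_stationary {R : Type} [CommRing R] [Fintype R] {α : ℝ}
    (hα0 : 0 < α) (hα1 : α ≤ 1) {β : R → ℝ} (hβ : ∀ x, 0 ≤ β x) (hβsum : ∑ x, β x = 1)
    {π : R → ℝ} (hπ : π ᵥ* Mmat R α β = π) (x : R) :
    (π ᵥ* Bmat R β) x =
      ∑ y ∈ univ.filter (fun y => Ideal.span ({x} : Set R) < Ideal.span {y}),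
          (∑ r ∈ univ.filter (fun r => y * r = x), β r) * π y +
        (∑ r ∈ univ.filter (fun r => IsUnit (Ideal.Quotient.mk (annId x) r)), β r) * π x := by
  rw [vecMul, dotProduct, ← sum_filter_add_sum_filter_not univ
    (fun y => Ideal.span ({x} : Set R) < Ideal.span {y}), ← sum_Bmat_filter_dvd, sum_mul]
  congr 1
  · exact sum_congr rfl fun y _ => mul_comm _ _
  rw [sum_filter, sum_filter]
  refine sum_congr rfl fun a _ => ?_
  by_cases hax : a ∣ x
  · have hnot_lt : ¬Ideal.span ({x} : Set R) < Ideal.span {a} ↔ x ∣ a := by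
      simp only [lt_iff_le_not_ge, Ideal.span_singleton_le_span_singleton, hax, true_and,
        not_not]
    rw [if_congr hnot_lt rfl rfl]
    split_ifs with hxa
    · rw [stationary_eq_of_associated hα0 hα1 hβ hβsum hπ
        (associated_of_dvd_dvd_of_finite hxa hax), mul_comm]
    · rfl
  · simp [Bmat_eq_zero_of_not_dvd hax]

theorem stmt14_general (R : Type) [CommRing R] [Fintype R]
    (α : ℝ) (hα0 : 0 < α) (hα1 : α < 1)
    (β : R → ℝ) (hβ : ∀ x, 0 ≤ β x) (hβsum : ∑ x, β x = 1)
    (π : R → ℝ) (hπsum : ∑ x, π x = 1)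
    (hπstat : ∀ b : R, ∑ a : R, π a * Mmat R α β a b = π b) :
    ∀ x : R,
      (1 - (1 - α) *
          ∑ r ∈ Finset.univ.filter
            (fun r => IsUnit (Ideal.Quotient.mk (annId x) r)), β r) * π x =
        α / (Fintype.card R : ℝ) +
          (1 - α) *
            ∑ y ∈ Finset.univ.filter
              (fun y => Ideal.span ({x} : Set R) < Ideal.span {y}),
              (∑ r ∈ Finset.univ.filter (fun r => y * r = x), β r) * π y := by
  intro x
  have hπ : π ᵥ* Mmat R α β = π := funext hπstat
  have hx := vecMul_Mmat_apply (β := β) α π x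
  rw [hπ, hπsum, mul_one, vecMul_Bmat_apply_of_stationary hα0 hα1.le hβ hβsum hπ x] at hx
  linear_combination hx

/-- The recursion satisfied by the stationary distribution of `M_R`:
`(1 − (1−α)·∑_{r∈F_x} β(r))·π(x)
  = α/|R| + (1−α)·∑_{y : xR ⊊ yR} (∑_{r : y·r = x} β(r))·π(y)`. -/
theorem stmt14 (R : Type) [CommRing R] [Fintype R]
    (α : ℝ) (hα0 : 0 < α) (hα1 : α < 1)
    (β : R → ℝ) (hβ : ∀ x, 0 ≤ β x) (hβsum : ∑ x, β x = 1)
    (π : R → ℝ) (hπ0 : ∀ x, 0 ≤ π x) (hπsum : ∑ x, π x = 1)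
    (hπstat : ∀ b : R, ∑ a : R, π a * Mmat R α β a b = π b) :
    ∀ x : R,
      (1 - (1 - α) *
          ∑ r ∈ Finset.univ.filter
            (fun r => IsUnit (Ideal.Quotient.mk (annId x) r)), β r) * π x =
        α / (Fintype.card R : ℝ) +
          (1 - α) *
            ∑ y ∈ Finset.univ.filter
              (fun y => Ideal.span ({x} : Set R) < Ideal.span {y}),
              (∑ r ∈ Finset.univ.filter (fun r => y * r = x), β r) * π y :=
  stmt14_general R α hα0 hα1 β hβ hβsum π hπsum hπstat
end

section
/- Let R be a finite chain ring with maximal ideal m, residue field cardinality q = |R/m|, and k the least positive integer with m^k = 0. Suppose β(x) = 1/|R| for all x ∈ R, and let π be a stationary distribution of M_R. Then π(0) = 1/(1+(q−1)α)^k, and for every i with 0 ≤ i < k and every x ∈ m^i with x ∉ m^{i+1}, π(x) = α / ( q^{k−i−1}·(1+(q−1)α)^{i+1} ). -/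
open Finset

open scoped Classical

/-!
With `β` uniform, the multiplicative step of the chain sends `a` to a uniformly distributed element
of the principal ideal `a R`. In a finite chain ring with `𝔪 = (t)` every element is `t ^ j * u`
with `u` a unit, so `a R = 𝔪 ^ j` for the level `j` of `a`, and `|𝔪 ^ j| = q ^ (k - j)` because
multiplication by `t ^ j` identifies `R ⧸ 𝔪` with `𝔪 ^ j ⧸ 𝔪 ^ (j + 1)`. The stationary equation
then shows that `π b` only depends on the level of `b`, and subtracting the equations at two
consecutive levels gives `(1 + (q - 1) α) π_(j+1) = q π_j` below level `k` and `α π_k = π_(k-1)`,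
while the equation at level `0` reads `q ^ (k - 1) (1 + (q - 1) α) π_0 = α`.
-/

open IsLocalRing

theorem card_quotient_pos {R : Type*} [CommRing R] [Finite R] (I : Ideal R) :
    0 < Nat.card (R ⧸ I) :=
  have : Finite (R ⧸ I) := Finite.of_surjective _ Ideal.Quotient.mk_surjective
  Nat.card_pos

section FiniteCommRing

variable {R : Type*} [CommRing R] [Fintype R]

theorem card_mul_fiber_mul_card_span {a b : R} (hb : b ∈ Ideal.span {a}) :
    #{x | a * x = b} * Nat.card (Ideal.span {a}) = Fintype.card R := by
  have hrange : ∀ y ∈ Ideal.span {a}, y ∈ Set.range (AddMonoidHom.mulLeft a) := fun y hy => by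
    obtain ⟨c, rfl⟩ := Ideal.mem_span_singleton.1 hy
    exact ⟨c, rfl⟩
  have hfiber : ∀ y ∈ Ideal.span {a}, #{x | a * x = y} = #{x | a * x = b} := fun y hy =>
    AddMonoidHom.card_fiber_eq_of_mem_range _ (hrange y hy) (hrange b hb)
  have hsum : Fintype.card R = ∑ y ∈ {y | y ∈ Ideal.span {a}}, #{x | a * x = y} :=
    Finset.card_eq_sum_card_fiberwise fun x _ => by
      simpa using Ideal.mem_span_singleton.2 (dvd_mul_right a x)
  rw [hsum, Finset.sum_congr rfl fun y hy => hfiber y (Finset.mem_filter.1 hy).2,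
    Finset.sum_const, smul_eq_mul, mul_comm, Nat.card_eq_fintype_card, Fintype.card_subtype]

end FiniteCommRing

section Stationary

variable {R : Type} [CommRing R] [Fintype R] {α : ℝ} {β π : R → ℝ}

theorem Mmat_apply_of_uniform (hβ : ∀ x, β x = 1 / Fintype.card R) (a b : R) :
    Mmat R α β a b = (α + (1 - α) * #{x | a * x = b}) / Fintype.card R := by
  simp only [Mmat, Bmat, hβ, Finset.sum_const, nsmul_eq_mul]
  ring

theorem mul_card_eq_of_stationary (hβ : ∀ x, β x = 1 / Fintype.card R) (hπsum : ∑ x, π x = 1)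
    (hπstat : ∀ b, ∑ a, π a * Mmat R α β a b = π b) (b : R) :
    π b * Fintype.card R = α + (1 - α) * ∑ a, π a * #{x | a * x = b} := by
  calc π b * Fintype.card R
      = ∑ a, (α * π a + (1 - α) * (π a * #{x | a * x = b})) := by
        rw [← hπstat b, Finset.sum_mul]
        refine Finset.sum_congr rfl fun a _ => ?_
        rw [Mmat_apply_of_uniform hβ]
        field_simp
    _ = α + (1 - α) * ∑ a, π a * #{x | a * x = b} := by
        rw [Finset.sum_add_distrib, ← Finset.mul_sum, ← Finset.mul_sum, hπsum, mul_one]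

end Stationary

section Level

variable {R : Type*} [CommRing R] [IsLocalRing R]

noncomputable def level (k : ℕ) (a : R) : ℕ :=
  Nat.findGreatest (fun i => a ∈ maximalIdeal R ^ i) k

variable (k : ℕ)

theorem level_le (a : R) : level k a ≤ k := Nat.findGreatest_le k

theorem mem_pow_level (a : R) : a ∈ maximalIdeal R ^ level k a :=
  Nat.findGreatest_spec (P := fun i => a ∈ maximalIdeal R ^ i) (Nat.zero_le k) (by simp)

theorem le_level_iff {a : R} {i : ℕ} (hi : i ≤ k) : i ≤ level k a ↔ a ∈ maximalIdeal R ^ i :=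
  ⟨fun h => Ideal.pow_le_pow_right h (mem_pow_level k a), fun h => Nat.le_findGreatest hi h⟩

theorem level_zero : level k (0 : R) = k :=
  Nat.findGreatest_eq (zero_mem _)

variable {k}

theorem notMem_pow_level_succ {a : R} (h : level k a < k) :
    a ∉ maximalIdeal R ^ (level k a + 1) :=
  Nat.findGreatest_is_greatest (lt_add_one _) h

theorem level_eq_iff {a : R} {i : ℕ} (hi : i < k) :
    level k a = i ↔ a ∈ maximalIdeal R ^ i ∧ a ∉ maximalIdeal R ^ (i + 1) := by
  rw [← le_level_iff k hi.le, ← le_level_iff k hi, not_le]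
  omega

theorem level_eq_self_iff (hk : maximalIdeal R ^ k = ⊥) {a : R} : level k a = k ↔ a = 0 := by
  refine ⟨fun h => ?_, fun h => h ▸ level_zero k⟩
  simpa [h, hk] using mem_pow_level k a

variable [Fintype R]

theorem card_level_eq_self (hk : maximalIdeal R ^ k = ⊥) : #{a : R | level k a = k} = 1 := by
  rw [Finset.card_eq_one]
  exact ⟨0, by ext; simp [level_eq_self_iff hk]⟩

theorem card_level_add_card_pow_succ {i : ℕ} (hi : i < k) :
    #{a : R | level k a = i} + #{a : R | a ∈ maximalIdeal R ^ (i + 1)}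
      = #{a : R | a ∈ maximalIdeal R ^ i} := by
  rw [← Finset.card_filter_add_card_filter_not (s := {a : R | a ∈ maximalIdeal R ^ i})
    (· ∈ maximalIdeal R ^ (i + 1)), add_comm, Finset.filter_filter, Finset.filter_filter]
  congr 2 <;> ext a
  · simpa using fun h => Ideal.pow_le_pow_right i.le_succ h
  · simp [level_eq_iff hi]

end Level

section ChainRing

variable {R : Type*} [CommRing R] [IsLocalRing R] {t : R} {k : ℕ}

theorem maximalIdeal_pow_eq_span (ht : maximalIdeal R = Ideal.span {t}) (i : ℕ) :
    maximalIdeal R ^ i = Ideal.span {t ^ i} := by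
  rw [ht, Ideal.span_singleton_pow]

theorem pow_ne_zero_of_lt (ht : maximalIdeal R = Ideal.span {t})
    (hkmin : ∀ j : ℕ, 0 < j → maximalIdeal R ^ j = ⊥ → k ≤ j) {i : ℕ} (hi : i < k) :
    t ^ i ≠ 0 := by
  intro h
  rcases i.eq_zero_or_pos with rfl | hpos
  · exact one_ne_zero (pow_zero t ▸ h)
  · have := hkmin i hpos (by rw [maximalIdeal_pow_eq_span ht, h, Ideal.span_singleton_eq_bot])
    omega

theorem pow_notMem_maximalIdeal_pow_succ (ht : maximalIdeal R = Ideal.span {t}) {i : ℕ}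
    (hti : t ^ i ≠ 0) : t ^ i ∉ maximalIdeal R ^ (i + 1) := by
  rw [maximalIdeal_pow_eq_span ht, Ideal.mem_span_singleton]
  rintro ⟨c, hc⟩
  have hunit : IsUnit (1 - t * c) := isUnit_one_sub_self_of_mem_nonunits _ <|
    (mem_maximalIdeal _).1 (ht ▸ Ideal.mul_mem_right c _ (Ideal.mem_span_singleton_self t))
  exact hti <| hunit.mul_left_eq_zero.1 (by linear_combination hc)

theorem mul_pow_mem_maximalIdeal_pow_succ_iff (ht : maximalIdeal R = Ideal.span {t}) {i : ℕ}
    (hti : t ^ i ≠ 0) {r : R} : r * t ^ i ∈ maximalIdeal R ^ (i + 1) ↔ r ∈ maximalIdeal R := by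
  refine ⟨fun h => ?_, fun hr => ?_⟩
  · by_contra hr
    obtain ⟨u, rfl⟩ := (notMem_maximalIdeal.1 hr : IsUnit r)
    exact pow_notMem_maximalIdeal_pow_succ ht hti <| by simpa using Ideal.mul_mem_left _ ↑u⁻¹ h
  · rw [pow_succ']
    exact Ideal.mul_mem_mul hr (maximalIdeal_pow_eq_span ht i ▸ Ideal.mem_span_singleton_self _)

theorem card_quotient_maximalIdeal_pow_succ (ht : maximalIdeal R = Ideal.span {t}) {i : ℕ}
    (hti : t ^ i ≠ 0) :
    Nat.card (R ⧸ maximalIdeal R ^ (i + 1))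
      = Nat.card (R ⧸ maximalIdeal R) * Nat.card (R ⧸ maximalIdeal R ^ i) := by
  let f := (maximalIdeal R ^ (i + 1)).mkQ ∘ₗ LinearMap.toSpanSingleton R R (t ^ i)
  have hker : LinearMap.ker f = maximalIdeal R := by
    ext r
    exact (Submodule.Quotient.mk_eq_zero _).trans (mul_pow_mem_maximalIdeal_pow_succ_iff ht hti)
  have hrange :
      LinearMap.range f = Submodule.map (maximalIdeal R ^ (i + 1)).mkQ (maximalIdeal R ^ i) := by
    rw [LinearMap.range_comp, ← LinearMap.span_singleton_eq_range, maximalIdeal_pow_eq_span ht i]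
  rw [← Submodule.card_quotient_mul_card_quotient _ _ (Ideal.pow_le_pow_right i.le_succ),
    ← hrange, ← Nat.card_congr f.quotKerEquivRange.toEquiv, hker]

theorem span_eq_pow_level (ht : maximalIdeal R = Ideal.span {t}) (hk : maximalIdeal R ^ k = ⊥)
    (a : R) : Ideal.span {a} = maximalIdeal R ^ level k a := by
  rcases (level_le k a).lt_or_eq with hlt | heq
  · have hmem := mem_pow_level k a
    have hnot := notMem_pow_level_succ hlt
    generalize level k a = j at hmem hnot ⊢
    rw [maximalIdeal_pow_eq_span ht, Ideal.mem_span_singleton] at hmem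
    obtain ⟨c, rfl⟩ := hmem
    have hc : IsUnit c := by
      by_contra hc
      refine hnot ?_
      rw [pow_succ]
      exact Ideal.mul_mem_mul (maximalIdeal_pow_eq_span ht _ ▸ Ideal.mem_span_singleton_self _)
        ((mem_maximalIdeal c).2 hc)
    rw [Ideal.span_singleton_mul_right_unit hc, maximalIdeal_pow_eq_span ht]
  · rw [heq, hk, (level_eq_self_iff hk).1 heq, Ideal.span_singleton_eq_bot]

theorem mem_span_singleton_iff_level_le (ht : maximalIdeal R = Ideal.span {t})
    (hk : maximalIdeal R ^ k = ⊥) {a b : R} :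
    b ∈ Ideal.span {a} ↔ level k a ≤ level k b := by
  rw [span_eq_pow_level ht hk, le_level_iff k (level_le k a)]

theorem card_quotient_maximalIdeal_pow (ht : maximalIdeal R = Ideal.span {t})
    (hti : ∀ i < k, t ^ i ≠ 0) {i : ℕ} (hi : i ≤ k) :
    Nat.card (R ⧸ maximalIdeal R ^ i) = Nat.card (R ⧸ maximalIdeal R) ^ i := by
  induction i with
  | zero => simp
  | succ i ih => rw [card_quotient_maximalIdeal_pow_succ ht (hti i hi), ih (by omega), pow_succ']

theorem card_eq_card_quotient_pow (ht : maximalIdeal R = Ideal.span {t})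
    (hk : maximalIdeal R ^ k = ⊥) (hti : ∀ i < k, t ^ i ≠ 0) :
    Nat.card R = Nat.card (R ⧸ maximalIdeal R) ^ k := by
  rw [Submodule.card_eq_card_quotient_mul_card (maximalIdeal R ^ k),
    card_quotient_maximalIdeal_pow ht hti le_rfl, hk]
  simp

theorem card_maximalIdeal_pow [Finite R] (ht : maximalIdeal R = Ideal.span {t})
    (hk : maximalIdeal R ^ k = ⊥) (hti : ∀ i < k, t ^ i ≠ 0) {i : ℕ} (hi : i ≤ k) :
    Nat.card ↥(maximalIdeal R ^ i) = Nat.card (R ⧸ maximalIdeal R) ^ (k - i) := by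
  have hq : 0 < Nat.card (R ⧸ maximalIdeal R) ^ i := pow_pos (card_quotient_pos _) i
  have h := Submodule.card_eq_card_quotient_mul_card (maximalIdeal R ^ i)
  rw [card_eq_card_quotient_pow ht hk hti, card_quotient_maximalIdeal_pow ht hti hi,
    ← Nat.sub_add_cancel hi, pow_add] at h
  exact (Nat.eq_of_mul_eq_mul_right hq h).symm

end ChainRing

section FiniteChainRing

variable {R : Type*} [CommRing R] [IsLocalRing R] [Fintype R] {t : R} {k : ℕ}

theorem card_mul_fiber_eq (ht : maximalIdeal R = Ideal.span {t}) (hk : maximalIdeal R ^ k = ⊥)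
    (hti : ∀ i < k, t ^ i ≠ 0) (a b : R) :
    #{x | a * x = b}
      = if level k a ≤ level k b then Nat.card (R ⧸ maximalIdeal R) ^ level k a else 0 := by
  split_ifs with hab
  · have h := card_mul_fiber_mul_card_span ((mem_span_singleton_iff_level_le ht hk).2 hab)
    rw [span_eq_pow_level ht hk, card_maximalIdeal_pow ht hk hti (level_le k a),
      ← Nat.card_eq_fintype_card, card_eq_card_quotient_pow ht hk hti,
      ← pow_sub_mul_pow _ (level_le k a), mul_comm _ (_ ^ level k a)] at h
    exact Nat.eq_of_mul_eq_mul_right (pow_pos (card_quotient_pos _) _) h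
  · refine Finset.card_eq_zero.2 (Finset.filter_eq_empty_iff.2 fun x _ hx => hab ?_)
    exact (mem_span_singleton_iff_level_le ht hk).1
      (hx ▸ Ideal.mul_mem_right x _ (Ideal.mem_span_singleton_self a))

theorem card_level_mul_pow (ht : maximalIdeal R = Ideal.span {t}) (hk : maximalIdeal R ^ k = ⊥)
    (hti : ∀ i < k, t ^ i ≠ 0) {i : ℕ} (hi : i < k) :
    (#{a : R | level k a = i} : ℝ) * (Nat.card (R ⧸ maximalIdeal R) : ℝ) ^ i
      = (Nat.card (R ⧸ maximalIdeal R) : ℝ) ^ k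
        - (Nat.card (R ⧸ maximalIdeal R) : ℝ) ^ (k - 1) := by
  have h := card_level_add_card_pow_succ (R := R) hi
  have hpow : ∀ j ≤ k,
      #{a : R | a ∈ maximalIdeal R ^ j} = Nat.card (R ⧸ maximalIdeal R) ^ (k - j) := fun j hj => by
      rw [← Fintype.card_subtype, ← Nat.card_eq_fintype_card, card_maximalIdeal_pow ht hk hti hj]
  rw [hpow _ hi, hpow _ hi.le] at h
  obtain ⟨e, rfl⟩ := Nat.exists_eq_add_of_lt hi
  rw [show i + e + 1 - (i + 1) = e by omega, show i + e + 1 - i = e + 1 by omega] at h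
  rw [show i + e + 1 - 1 = i + e by omega]
  have h' := congrArg (Nat.cast (R := ℝ)) h
  push_cast at h'
  linear_combination (Nat.card (R ⧸ maximalIdeal R) : ℝ) ^ i * h'

end FiniteChainRing

section StationaryChainRing

variable {R : Type} [CommRing R] [IsLocalRing R] [Fintype R] {t : R} {k : ℕ}

theorem stationary_eq_sum_level (ht : maximalIdeal R = Ideal.span {t})
    (hk : maximalIdeal R ^ k = ⊥) (hti : ∀ i < k, t ^ i ≠ 0) {α : ℝ} {β π : R → ℝ}
    (hβ : ∀ x, β x = 1 / Fintype.card R) (hπsum : ∑ x, π x = 1)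
    (hπstat : ∀ b, ∑ a, π a * Mmat R α β a b = π b) (b : R) :
    π b * (Nat.card (R ⧸ maximalIdeal R) : ℝ) ^ k = α + (1 - α) *
      ∑ i ∈ range (level k b + 1),
        (Nat.card (R ⧸ maximalIdeal R) : ℝ) ^ i * ∑ a with level k a = i, π a := by
  have hcard : (Fintype.card R : ℝ) = (Nat.card (R ⧸ maximalIdeal R) : ℝ) ^ k := by
    rw [← Nat.card_eq_fintype_card, card_eq_card_quotient_pow ht hk hti, Nat.cast_pow]
  rw [← hcard, mul_card_eq_of_stationary hβ hπsum hπstat b]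
  congr 2
  calc ∑ a, π a * (#{x | a * x = b} : ℝ)
      = ∑ a, ∑ i ∈ range (level k b + 1),
          if level k a = i then (Nat.card (R ⧸ maximalIdeal R) : ℝ) ^ i * π a else 0 := by
        refine Finset.sum_congr rfl fun a _ => ?_
        rw [card_mul_fiber_eq ht hk hti, Finset.sum_ite_eq]
        simp only [Finset.mem_range, Nat.lt_succ_iff]
        split_ifs <;> push_cast <;> ring
    _ = _ := by
        rw [Finset.sum_comm]
        refine Finset.sum_congr rfl fun i _ => ?_
        rw [Finset.mul_sum, Finset.sum_filter]

theorem exists_level_profile (ht : maximalIdeal R = Ideal.span {t})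
    (hk : maximalIdeal R ^ k = ⊥) (hti : ∀ i < k, t ^ i ≠ 0) {α : ℝ} {β π : R → ℝ}
    (hβ : ∀ x, β x = 1 / Fintype.card R) (hπsum : ∑ x, π x = 1)
    (hπstat : ∀ b, ∑ a, π a * Mmat R α β a b = π b) :
    ∃ p : ℕ → ℝ, (∀ b, π b = p (level k b)) ∧ ∀ j, (Nat.card (R ⧸ maximalIdeal R) : ℝ) ^ k * p j
      = α + (1 - α) * ∑ i ∈ range (j + 1),
        #{a : R | level k a = i} * (Nat.card (R ⧸ maximalIdeal R) : ℝ) ^ i * p i := by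
  set q : ℝ := (Nat.card (R ⧸ maximalIdeal R) : ℝ)
  have hq : q ^ k ≠ 0 := pow_ne_zero _ (Nat.cast_ne_zero.2 (card_quotient_pos _).ne')
  set p : ℕ → ℝ := fun j =>
    (α + (1 - α) * ∑ i ∈ range (j + 1), q ^ i * ∑ a with level k a = i, π a) / q ^ k
  have hπ : ∀ b, π b = p (level k b) := fun b =>
    eq_div_of_mul_eq hq (stationary_eq_sum_level ht hk hti hβ hπsum hπstat b)
  refine ⟨p, hπ, fun j => ?_⟩
  rw [mul_div_cancel₀ _ hq]
  congr 2
  refine Finset.sum_congr rfl fun i _ => ?_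
  rw [Finset.sum_congr rfl fun a ha => (hπ a).trans (congrArg p (Finset.mem_filter.1 ha).2),
    Finset.sum_const, nsmul_eq_mul]
  ring

end StationaryChainRing

theorem eq_of_level_recursion {q α : ℝ} {k : ℕ} {c p : ℕ → ℝ} (hq : 0 < q) (hα0 : 0 < α)
    (hα1 : α < 1) (hk0 : 0 < k) (hc : ∀ i < k, c i * q ^ i = q ^ k - q ^ (k - 1)) (hck : c k = 1)
    (hp : ∀ j, q ^ k * p j = α + (1 - α) * ∑ i ∈ range (j + 1), c i * q ^ i * p i) :
    (∀ j < k, p j = α / (q ^ (k - j - 1) * (1 + (q - 1) * α) ^ (j + 1))) ∧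
      p k = 1 / (1 + (q - 1) * α) ^ k := by
  set D := 1 + (q - 1) * α
  have hD : 0 < D := by nlinarith
  obtain ⟨n, rfl⟩ : ∃ n, k = n + 1 := ⟨k - 1, by omega⟩
  simp only [Nat.add_sub_cancel] at hc
  have hdiff : ∀ j, q ^ (n + 1) * p (j + 1)
      = q ^ (n + 1) * p j + (1 - α) * (c (j + 1) * q ^ (j + 1) * p (j + 1)) := fun j => by
    rw [hp, hp, Finset.sum_range_succ]
    ring
  have h0 : p 0 * (q ^ n * D) = α := by
    have := hp 0
    rw [Finset.sum_range_one, hc 0 (by omega)] at this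
    linear_combination this
  have hstep : ∀ j, j + 1 < n + 1 → D * p (j + 1) = q * p j := fun j hj => by
    have h := hdiff j
    rw [hc (j + 1) hj] at h
    exact mul_left_cancel₀ (pow_ne_zero n hq.ne') (by linear_combination h)
  have hlast : α * p (n + 1) = p n := by
    have h := hdiff n
    rw [hck] at h
    exact mul_left_cancel₀ (pow_ne_zero (n + 1) hq.ne') (by linear_combination h)
  have hform : ∀ j < n + 1, p j * (q ^ (n - j) * D ^ (j + 1)) = α := by
    intro j hj
    induction j with
    | zero => simpa using h0
    | succ j ih =>
      obtain ⟨e, he⟩ := Nat.exists_eq_add_of_lt hj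
      rw [show n - j = e + 1 by omega, show n - (j + 1) = e by omega] at *
      linear_combination q ^ e * D ^ (j + 1) * hstep j hj + ih (by omega)
  refine ⟨fun j hj => ?_, ?_⟩
  · rw [eq_div_iff (by positivity), show n + 1 - j - 1 = n - j by omega]
    exact hform j hj
  · have h := hform n (by omega)
    rw [Nat.sub_self, pow_zero, one_mul, ← hlast] at h
    rw [eq_div_iff (by positivity)]
    exact mul_left_cancel₀ hα0.ne' (by linear_combination h)

theorem stmt17_general (R : Type) [CommRing R] [Fintype R] [IsLocalRing R]
    [IsPrincipalIdealRing R]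
    (q : ℕ) (hq : q = Nat.card (R ⧸ IsLocalRing.maximalIdeal R))
    (k : ℕ) (hk0 : 0 < k) (hk : IsLocalRing.maximalIdeal R ^ k = ⊥)
    (hkmin : ∀ j : ℕ, 0 < j → IsLocalRing.maximalIdeal R ^ j = ⊥ → k ≤ j)
    (α : ℝ) (hα0 : 0 < α) (hα1 : α < 1)
    (β : R → ℝ) (hβ : ∀ x, β x = 1 / (Fintype.card R : ℝ))
    (π : R → ℝ) (hπsum : ∑ x, π x = 1)
    (hπstat : ∀ b : R, ∑ a : R, π a * Mmat R α β a b = π b) :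
    π 0 = 1 / (1 + ((q : ℝ) - 1) * α) ^ k ∧
    ∀ i : ℕ, i < k → ∀ x : R,
      x ∈ IsLocalRing.maximalIdeal R ^ i →
      x ∉ IsLocalRing.maximalIdeal R ^ (i + 1) →
      π x = α / ((q : ℝ) ^ (k - i - 1) * (1 + ((q : ℝ) - 1) * α) ^ (i + 1)) := by
  subst hq
  obtain ⟨t, ht⟩ := (IsPrincipalIdealRing.principal (maximalIdeal R)).principal
  rw [Ideal.submodule_span_eq] at ht
  have hti : ∀ i < k, t ^ i ≠ 0 := fun i hi => pow_ne_zero_of_lt ht hkmin hi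
  obtain ⟨p, hπp, hp⟩ := exists_level_profile ht hk hti hβ hπsum hπstat
  obtain ⟨hpj, hpk⟩ := eq_of_level_recursion (Nat.cast_pos.2 (card_quotient_pos _)) hα0 hα1 hk0
    (fun i hi => card_level_mul_pow ht hk hti hi) (by rw [card_level_eq_self hk, Nat.cast_one]) hp
  refine ⟨?_, fun i hi x hx hx' => ?_⟩
  · rw [hπp, level_zero, hpk]
  · rw [hπp, (level_eq_iff hi).2 ⟨hx, hx'⟩, hpj i hi]

/-- The stationary distribution of `(X̃ₙ)` on a finite chain ring:
`π(0) = 1/(1+(q−1)α)^k` and `π(x) = α/(q^{k−i−1}(1+(q−1)α)^{i+1})` for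
`x ∈ m^i \ m^{i+1}`, `0 ≤ i < k`. -/
theorem stmt17 (R : Type) [CommRing R] [Fintype R] [IsLocalRing R]
    [IsPrincipalIdealRing R]
    (q : ℕ) (hq : q = Nat.card (R ⧸ IsLocalRing.maximalIdeal R))
    (k : ℕ) (hk0 : 0 < k) (hk : IsLocalRing.maximalIdeal R ^ k = ⊥)
    (hkmin : ∀ j : ℕ, 0 < j → IsLocalRing.maximalIdeal R ^ j = ⊥ → k ≤ j)
    (α : ℝ) (hα0 : 0 < α) (hα1 : α < 1)
    (β : R → ℝ) (hβ : ∀ x, β x = 1 / (Fintype.card R : ℝ))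
    (π : R → ℝ) (hπ0 : ∀ x, 0 ≤ π x) (hπsum : ∑ x, π x = 1)
    (hπstat : ∀ b : R, ∑ a : R, π a * Mmat R α β a b = π b) :
    π 0 = 1 / (1 + ((q : ℝ) - 1) * α) ^ k ∧
    ∀ i : ℕ, i < k → ∀ x : R,
      x ∈ IsLocalRing.maximalIdeal R ^ i →
      x ∉ IsLocalRing.maximalIdeal R ^ (i + 1) →
      π x = α / ((q : ℝ) ^ (k - i - 1) * (1 + ((q : ℝ) - 1) * α) ^ (i + 1)) :=
  stmt17_general R q hq k hk0 hk hkmin α hα0 hα1 β hβ π hπsum hπstat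
end
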